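/- arXiv:1410.4376 — 3 statements merged into one kernel-verified Lean document; each statement's English description precedes it below -/
import Mathlib

section
/- Let f, f̂ be integers. The ℚ-linear span of the three extended charge vectors l⁽⁴⁾, l⁽⁵⁾, l⁽⁰⁾(f) in ℚ⁷ equals the ℚ-linear span of the three extended charge vectors l̂⁽¹⁾, l̂⁽⁵⁾, l̂⁽⁰⁾(f̂) in ℚ⁷ if and only if f = 5·f̂ + 2. -/
/-- Extended charge vector `l⁽⁴⁾` for the orbifold `[ℂ³/ℤ₅(1,1,3)]`. -/
def chargeL4 : Fin 7 → ℚ := ![-1/5, -2/5, -2/5, 1, 0, 0, 0]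

/-- Extended charge vector `l⁽⁵⁾` for the orbifold `[ℂ³/ℤ₅(1,1,3)]`. -/
def chargeL5 : Fin 7 → ℚ := ![-3/5, -1/5, -1/5, 0, 1, 0, 0]

/-- Extended charge vector `l⁽⁰⁾(f)` for the orbifold at framing `f`. -/
def chargeL0 (f : ℤ) : Fin 7 → ℚ := ![1/5, (f : ℚ)/5, -((f : ℚ)+1)/5, 0, 0, 1, -1]

/-- Extended charge vector `l̂⁽¹⁾` for the crepant resolution. -/
def chargeLh1 : Fin 7 → ℚ := ![1, 2, 2, -5, 0, 0, 0]

/-- Extended charge vector `l̂⁽⁵⁾` for the crepant resolution. -/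
def chargeLh5 : Fin 7 → ℚ := ![0, 1, 1, -3, 1, 0, 0]

/-- Extended charge vector `l̂⁽⁰⁾(f̂)` for the crepant resolution at framing `f̂`. -/
def chargeLh0 (fh : ℤ) : Fin 7 → ℚ := ![0, (fh : ℚ), -(fh : ℚ)-1, 1, 0, 1, -1]

/-- The ℚ-linear span of the orbifold extended charge vectors equals the span of the
resolution extended charge vectors if and only if `f = 5·f̂ + 2`. -/
theorem span_charge_vectors_eq_iff (f fh : ℤ) :
    Submodule.span ℚ ({chargeL4, chargeL5, chargeL0 f} : Set (Fin 7 → ℚ)) =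
      Submodule.span ℚ ({chargeLh1, chargeLh5, chargeLh0 fh} : Set (Fin 7 → ℚ)) ↔
    f = 5 * fh + 2 := by
  constructor
  · intro h
    have h0 : chargeL0 f ∈ Submodule.span ℚ ({chargeLh1, chargeLh5, chargeLh0 fh} : Set (Fin 7 → ℚ)) := by
      rw [← h]; exact Submodule.subset_span (by simp)
    rw [Submodule.mem_span_insert] at h0
    obtain ⟨a, z, hz, hx⟩ := h0
    rw [Submodule.mem_span_insert] at hz
    obtain ⟨b, w, hw, hz⟩ := hz
    rw [Submodule.mem_span_singleton] at hw
    obtain ⟨c, rfl⟩ := hw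
    subst hz
    have e0 := congrFun hx ⟨0, by norm_num⟩
    have e1 := congrFun hx ⟨1, by norm_num⟩
    have e3 := congrFun hx ⟨3, by norm_num⟩
    have e5 := congrFun hx ⟨5, by norm_num⟩
    simp only [chargeL0, chargeLh1, chargeLh5, chargeLh0, Pi.add_apply, Pi.smul_apply,
      smul_eq_mul, Matrix.cons_val_zero', Matrix.cons_val_succ'] at e0 e1 e3 e5
    have hQ : (f : ℚ) = 5 * (fh : ℚ) + 2 := by
      have hc : c = 1 := by linarith
      subst hc
      have hb : b = 0 := by linarith
      subst hb
      field_simp at e1 ⊢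
      linarith
    exact_mod_cast hQ
  · rintro rfl
    apply le_antisymm <;> rw [Submodule.span_le] <;> rintro x (rfl | rfl | rfl)
    · have e : chargeL4 = (-1/5 : ℚ) • chargeLh1 := by
        funext i
        fin_cases i <;>
          simp only [chargeL4, chargeLh1, Pi.smul_apply, smul_eq_mul, Fin.zero_eta, Fin.mk_one,
            Matrix.cons_val_zero', Matrix.cons_val_succ'] <;> norm_num
      rw [e]
      exact Submodule.smul_mem _ _ (Submodule.subset_span (by simp))
    · have e : chargeL5 = (-3/5 : ℚ) • chargeLh1 + chargeLh5 := by
        funext i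
        fin_cases i <;>
          simp only [chargeL5, chargeLh1, chargeLh5, Pi.add_apply, Pi.smul_apply, smul_eq_mul,
            Fin.zero_eta, Fin.mk_one, Matrix.cons_val_zero', Matrix.cons_val_succ'] <;> norm_num
      rw [e]
      exact Submodule.add_mem _ (Submodule.smul_mem _ _ (Submodule.subset_span (by simp)))
        (Submodule.subset_span (by simp))
    · have e : chargeL0 (5 * fh + 2) = (1/5 : ℚ) • chargeLh1 + chargeLh0 fh := by
        funext i
        fin_cases i <;>
          simp only [chargeL0, chargeLh1, chargeLh0, Pi.add_apply, Pi.smul_apply, smul_eq_mul,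
            Fin.zero_eta, Fin.mk_one, Matrix.cons_val_zero', Matrix.cons_val_succ'] <;>
          norm_num [Matrix.cons_val_zero, Matrix.cons_val_one, Matrix.head_cons] <;> push_cast <;> ring
      rw [e]
      exact Submodule.add_mem _ (Submodule.smul_mem _ _ (Submodule.subset_span (by simp)))
        (Submodule.subset_span (by simp))
    · have e : chargeLh1 = (-5 : ℚ) • chargeL4 := by
        funext i
        fin_cases i <;>
          simp only [chargeL4, chargeLh1, Pi.smul_apply, smul_eq_mul, Fin.zero_eta, Fin.mk_one,
            Matrix.cons_val_zero', Matrix.cons_val_succ'] <;> norm_num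
      rw [e]
      exact Submodule.smul_mem _ _ (Submodule.subset_span (by simp))
    · have e : chargeLh5 = (-3 : ℚ) • chargeL4 + chargeL5 := by
        funext i
        fin_cases i <;>
          simp only [chargeL4, chargeL5, chargeLh5, Pi.add_apply, Pi.smul_apply, smul_eq_mul,
            Fin.zero_eta, Fin.mk_one, Matrix.cons_val_zero', Matrix.cons_val_succ'] <;> norm_num
      rw [e]
      exact Submodule.add_mem _ (Submodule.smul_mem _ _ (Submodule.subset_span (by simp)))
        (Submodule.subset_span (by simp))
    · have e : chargeLh0 fh = chargeL4 + chargeL0 (5 * fh + 2) := by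
        funext i
        fin_cases i <;>
          simp only [chargeL4, chargeL0, chargeLh0, Pi.add_apply, Fin.zero_eta, Fin.mk_one,
            Matrix.cons_val_zero', Matrix.cons_val_succ'] <;>
          norm_num [Matrix.cons_val_zero, Matrix.cons_val_one, Matrix.head_cons] <;> push_cast <;> ring
      rw [e]
      exact Submodule.add_mem _ (Submodule.subset_span (by simp)) (Submodule.subset_span (by simp))
end

section
/- Let f̂ be an integer and set f = 5·f̂ + 2. For all integers m₀, m₁, m₅, setting m₄ = m₀ − 5·m₁ − 3·m₅, the difference of sign-exponents [⌊(−2·m₄ − m₅)/5⌋ + m₀·(1 − (f+1)/5)] − [2·m₁ + m₅ + (f̂ + 2/5)·m₀ + ⌊−2·m₀/5⌋], computed in ℚ, equals the even integer −2·f̂·m₀; consequently exp(iπ·x) takes the same value on the two exponents x. -/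
open Real Complex

theorem Int.floor_add_mul_div {K : Type*} [Field K] [LinearOrder K] [IsStrictOrderedRing K]
    [FloorRing K] (a : K) (b : ℤ) {n : K} (hn : n ≠ 0) :
    ⌊(a + n * b) / n⌋ = ⌊a / n⌋ + b := by
  rw [add_div, mul_div_cancel_left₀ _ hn, Int.floor_add_intCast]

theorem Complex.exp_pi_mul_I_mul_eq_of_sub_eq_two_mul_int {x y : ℂ} (k : ℤ)
    (h : x - y = 2 * k) : exp (π * I * x) = exp (π * I * y) := by
  rw [show π * I * x = π * I * y + k * (2 * π * I) by linear_combination π * I * h,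
    exp_add, exp_int_mul_two_pi_mul_I, mul_one]

/-- Let `f = 5·f̂ + 2` and `m₄ = m₀ − 5·m₁ − 3·m₅`.  Then the difference of the two
sign-exponents `⌊(−2m₄ − m₅)/5⌋ + m₀·(1 − (f+1)/5)` and
`2m₁ + m₅ + (f̂ + 2/5)·m₀ + ⌊−2m₀/5⌋`, computed in `ℚ`, equals the even integer
`−2·f̂·m₀`; consequently `exp(iπ·x)` takes the same value on the two exponents. -/
theorem sign_exponents_difference (fh f : ℤ) (hf : f = 5 * fh + 2)
    (m0 m1 m5 m4 : ℤ) (hm4 : m4 = m0 - 5 * m1 - 3 * m5) :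
    ((⌊((-2 * m4 - m5 : ℤ) : ℚ) / 5⌋ : ℚ) + (m0 : ℚ) * (1 - ((f : ℚ) + 1) / 5)) -
        ((2 * m1 + m5 : ℤ) + ((fh : ℚ) + 2 / 5) * (m0 : ℚ) + (⌊((-2 * m0 : ℤ) : ℚ) / 5⌋ : ℚ)) =
      ((-2 * fh * m0 : ℤ) : ℚ) ∧
    Complex.exp ((Real.pi : ℂ) * Complex.I *
        (((⌊((-2 * m4 - m5 : ℤ) : ℚ) / 5⌋ : ℚ) + (m0 : ℚ) * (1 - ((f : ℚ) + 1) / 5) : ℚ) : ℂ)) =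
      Complex.exp ((Real.pi : ℂ) * Complex.I *
        ((((2 * m1 + m5 : ℤ) : ℚ) + ((fh : ℚ) + 2 / 5) * (m0 : ℚ) +
          (⌊((-2 * m0 : ℤ) : ℚ) / 5⌋ : ℚ) : ℚ) : ℂ)) := by
  have hfloor : ⌊((-2 * m4 - m5 : ℤ) : ℚ) / 5⌋ = ⌊((-2 * m0 : ℤ) : ℚ) / 5⌋ + (2 * m1 + m5) := by
    rw [← Int.floor_add_mul_div _ _ (by norm_num : (5 : ℚ) ≠ 0), hm4]
    push_cast
    ring_nf
  have hdiff : ((⌊((-2 * m4 - m5 : ℤ) : ℚ) / 5⌋ : ℚ) + (m0 : ℚ) * (1 - ((f : ℚ) + 1) / 5)) -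
        ((2 * m1 + m5 : ℤ) + ((fh : ℚ) + 2 / 5) * (m0 : ℚ) + (⌊((-2 * m0 : ℤ) : ℚ) / 5⌋ : ℚ)) =
      ((-2 * fh * m0 : ℤ) : ℚ) := by
    rw [hfloor, hf]
    push_cast
    ring
  refine ⟨hdiff, exp_pi_mul_I_mul_eq_of_sub_eq_two_mul_int (-fh * m0) ?_⟩
  rw [← Rat.cast_sub, hdiff]
  push_cast
  ring
end

section
/- Let f̂ ≥ 1 be an integer, set f = 5·f̂ + 2, and let q̂₀, q̂₁, q̂₅ be positive real numbers. For all integers m̂₀ ≥ 1, m̂₁ ≥ 0, m̂₅ ≥ 0 with m₄ := m̂₀ − 5·m̂₁ − 3·m̂₅ ≥ 0, the term of the orbifold superpotential series, namely exp(iπ·(⌊(−2·m₄ − m̂₅)/5⌋ + m̂₀·(1 − (f+1)/5))) · q₀^(m̂₀) · q₄^(m₄) · q₅^(m̂₅) · Γ((f+1)·m̂₀/5 + (2/5)·m₄ + (1/5)·m̂₅) / [ (m̂₀/5) · Γ(1 + (m̂₀ − m₄ − 3·m̂₅)/5) · Γ(1 + m₄) · Γ(1 + m̂₅) · Γ(1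 + (f/5)·m̂₀ − (2/5)·m₄ − (1/5)·m̂₅) ], evaluated at q₄ = q̂₁^(−1/5), q₅ = q̂₁^(−3/5)·q̂₅, q₀ = q̂₁^(1/5)·q̂₀, equals 5 times the corresponding term of the resolution superpotential series, namely exp(iπ·(2·m̂₁ + m̂₅ + (f̂ + 2/5)·m̂₀ + ⌊−2·m̂₀/5⌋)) · q̂₀^(m̂₀) · q̂₁^(m̂₁) · q̂₅^(m̂₅) · Γ((f̂+1)·m̂₀ − 2·m̂₁ − m̂₅) / [ m̂₀ · Γ(1 + m̂₀ − 5·m̂₁ − 3·m̂₅) · Γ(1 + m̂₁) · Γ(1 + m̂₅) · Γ(1 + f̂·m̂₀ + 2·m̂₁ + m̂₅) ]. -/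
/-!
Under `f = 5 f̂ + 2` and `m₄ = m̂₀ - 5 m̂₁ - 3 m̂₅` the arguments of the five Gamma factors of the
orbifold term become exactly those of the resolution term, and the prefactor `m̂₀ / 5` against
`m̂₀` gives the factor `5`. The mirror map turns `q₀^m̂₀ q₄^m₄ q₅^m̂₅` into `q̂₀^m̂₀ q̂₁^m̂₁ q̂₅^m̂₅`,
since the exponents of `q̂₁` add up to `m̂₁`. Finally the floor in the orbifold phase equals
`⌊-2 m̂₀ / 5⌋ + 2 m̂₁ + m̂₅`, after which the two phases differ by the even integer `2 f̂ m̂₀`.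
-/

open Real Complex

/-- The general term of the orbifold superpotential series `W_f^{X,L}` for
`X = [ℂ³/ℤ₅(1,1,3)]` at framing `f`, with Kähler parameters `q₀, q₄, q₅` (positive reals)
and indices `(m₀, m₄, m₅)`.  Here `(−1)^x` is interpreted as `exp(iπ·x)` and `Γ` is the
complex Gamma function. -/
noncomputable def orbSuperTerm (f : ℤ) (q0 q4 q5 : ℝ) (m0 m4 m5 : ℤ) : ℂ :=
  Complex.exp ((Real.pi : ℂ) * Complex.I *
      ((⌊((-2 * m4 - m5 : ℤ) : ℚ) / 5⌋ : ℂ) + (m0 : ℂ) * (1 - ((f : ℂ) + 1) / 5))) *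
    ((q0 ^ m0 * q4 ^ m4 * q5 ^ m5 : ℝ) : ℂ) *
    Complex.Gamma (((f : ℂ) + 1) * m0 / 5 + 2 / 5 * m4 + 1 / 5 * m5) /
    ((m0 : ℂ) / 5 * Complex.Gamma (1 + ((m0 : ℂ) - m4 - 3 * m5) / 5) *
      Complex.Gamma (1 + (m4 : ℂ)) * Complex.Gamma (1 + (m5 : ℂ)) *
      Complex.Gamma (1 + (f : ℂ) / 5 * m0 - 2 / 5 * m4 - 1 / 5 * m5))

/-- The general term of the resolution superpotential series `W_f̂^{X̂,L̂}` for the toric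
crepant resolution of `[ℂ³/ℤ₅(1,1,3)]` at framing `f̂`, with Kähler parameters
`q̂₀, q̂₁, q̂₅` (positive reals) and indices `(m̂₀, m̂₁, m̂₅)`. -/
noncomputable def resSuperTerm (fh : ℤ) (qh0 qh1 qh5 : ℝ) (m0 m1 m5 : ℤ) : ℂ :=
  Complex.exp ((Real.pi : ℂ) * Complex.I *
      ((2 * m1 + m5 : ℂ) + ((fh : ℂ) + 2 / 5) * m0 + (⌊((-2 * m0 : ℤ) : ℚ) / 5⌋ : ℂ))) *
    ((qh0 ^ m0 * qh1 ^ m1 * qh5 ^ m5 : ℝ) : ℂ) *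
    Complex.Gamma (((fh : ℂ) + 1) * m0 - 2 * m1 - m5) /
    ((m0 : ℂ) * Complex.Gamma (1 + (m0 : ℂ) - 5 * m1 - 3 * m5) *
      Complex.Gamma (1 + (m1 : ℂ)) * Complex.Gamma (1 + (m5 : ℂ)) *
      Complex.Gamma (1 + (fh : ℂ) * m0 + 2 * m1 + m5))

theorem orbifold_phase_eq_resolution_phase (fh m0 m1 m5 : ℤ) :
    Complex.exp (π * I * ((⌊((-2 * (m0 - 5 * m1 - 3 * m5) - m5 : ℤ) : ℚ) / 5⌋ : ℂ) +
        (m0 : ℂ) * (1 - (((5 * fh + 2 : ℤ) : ℂ) + 1) / 5))) =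
      Complex.exp (π * I *
        ((2 * m1 + m5 : ℂ) + ((fh : ℂ) + 2 / 5) * m0 + (⌊((-2 * m0 : ℤ) : ℚ) / 5⌋ : ℂ))) := by
  have hfloor : ⌊((-2 * (m0 - 5 * m1 - 3 * m5) - m5 : ℤ) : ℚ) / 5⌋ =
      ⌊((-2 * m0 : ℤ) : ℚ) / 5⌋ + (2 * m1 + m5) := by
    rw [← Int.floor_add_intCast]
    congr 1
    push_cast
    ring
  rw [hfloor, Complex.exp_eq_exp_iff_exists_int]
  exact ⟨-fh * m0, by push_cast; ring⟩

theorem mirror_map_monomial {q1 : ℝ} (hq1 : 0 < q1) (q0 q5 : ℝ) (m0 m1 m5 : ℤ) :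
    (q1 ^ ((1 : ℝ) / 5) * q0) ^ m0 * (q1 ^ (-(1 : ℝ) / 5)) ^ (m0 - 5 * m1 - 3 * m5) *
      (q1 ^ (-(3 : ℝ) / 5) * q5) ^ m5 = q0 ^ m0 * q1 ^ m1 * q5 ^ m5 := by
  have hq1_pow : (q1 ^ ((1 : ℝ) / 5)) ^ m0 * (q1 ^ (-(1 : ℝ) / 5)) ^ (m0 - 5 * m1 - 3 * m5) *
      (q1 ^ (-(3 : ℝ) / 5)) ^ m5 = q1 ^ m1 := by
    simp only [← Real.rpow_mul_intCast hq1.le, ← Real.rpow_add hq1, ← Real.rpow_intCast]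
    congr 1
    push_cast
    ring
  rw [← hq1_pow, mul_zpow, mul_zpow]
  ring

theorem superpotential_terms_correspondence_general (fh : ℤ) (f : ℤ)
    (hf : f = 5 * fh + 2) (qh0 qh1 qh5 : ℝ) (h1 : 0 < qh1)
    (m0 m1 m5 : ℤ) :
    orbSuperTerm f (qh1 ^ ((1 : ℝ) / 5) * qh0) (qh1 ^ (-(1 : ℝ) / 5))
        (qh1 ^ (-(3 : ℝ) / 5) * qh5) m0 (m0 - 5 * m1 - 3 * m5) m5 =
      5 * resSuperTerm fh qh0 qh1 qh5 m0 m1 m5 := by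
  subst hf
  unfold orbSuperTerm resSuperTerm
  rw [orbifold_phase_eq_resolution_phase, mirror_map_monomial h1]
  push_cast
  -- `ring_nf` also normalises inside the Gamma factors, whose arguments now agree pairwise.
  ring_nf

/-- Term-by-term quantum McKay correspondence for `[ℂ³/ℤ₅(1,1,3)]`: with `f̂ ≥ 1`,
`f = 5·f̂ + 2`, positive Kähler parameters `q̂₀, q̂₁, q̂₅`, and indices `m̂₀ ≥ 1`,
`m̂₁, m̂₅ ≥ 0` with `m₄ = m̂₀ − 5·m̂₁ − 3·m̂₅ ≥ 0`, the orbifold superpotential term at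
`(m̂₀, m₄, m̂₅)` evaluated at `q₄ = q̂₁^(−1/5)`, `q₅ = q̂₁^(−3/5)·q̂₅`, `q₀ = q̂₁^(1/5)·q̂₀`
equals `5` times the resolution superpotential term at `(m̂₀, m̂₁, m̂₅)`. -/
theorem superpotential_terms_correspondence (fh : ℤ) (hfh : 1 ≤ fh) (f : ℤ)
    (hf : f = 5 * fh + 2) (qh0 qh1 qh5 : ℝ) (h0 : 0 < qh0) (h1 : 0 < qh1) (h5 : 0 < qh5)
    (m0 m1 m5 : ℤ) (hm0 : 1 ≤ m0) (hm1 : 0 ≤ m1) (hm5 : 0 ≤ m5)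
    (hm4 : 0 ≤ m0 - 5 * m1 - 3 * m5) :
    orbSuperTerm f (qh1 ^ ((1 : ℝ) / 5) * qh0) (qh1 ^ (-(1 : ℝ) / 5))
        (qh1 ^ (-(3 : ℝ) / 5) * qh5) m0 (m0 - 5 * m1 - 3 * m5) m5 =
      5 * resSuperTerm fh qh0 qh1 qh5 m0 m1 m5 :=
  superpotential_terms_correspondence_general fh f hf qh0 qh1 qh5 h1 m0 m1 m5
end
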